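/- arXiv:2510.08486 — 3 statements merged into one kernel-verified Lean document; each statement's English description precedes it below -/
import Mathlib

section
/- Let p be an odd prime and K_p the p-adic numbers. Let a, b, d be integers with d squarefree, p dividing d, and p not dividing 2a(a^2-4b). Then there is no point (x,y) in Q_p × Q_p satisfying d·y^2 = (a^2-4b)·x^4 - 2·a·d·x^2 + d^2. -/
/-!
Since `v_p(d) = 1`, the left-hand side `d y²` has odd valuation. On the right, one term strictly
dominates: `(a² - 4b) x⁴` (valuation `4 v(x)`) when `v(x) ≤ 0`, and `d²` (valuation `2`) when
`v(x) ≥ 1`, the middle term `2ad x²` having valuation `1 + 2 v(x)`. So the right-hand side has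
even valuation.
-/

namespace Padic

variable {p : ℕ} [Fact p.Prime]

lemma valuation_neg (x : ℚ_[p]) : (-x).valuation = x.valuation := by
  have h := valuation_pow (-x) 2
  rw [neg_sq, valuation_pow] at h
  push_cast at h
  omega

lemma valuation_add_of_lt {x y : ℚ_[p]} (hx : x ≠ 0) (h : x.valuation < y.valuation) :
    x + y ≠ 0 ∧ (x + y).valuation = x.valuation := by
  have hxy : x + y ≠ 0 := by
    intro h0
    rw [← neg_eq_of_add_eq_zero_right h0, valuation_neg] at h
    exact h.false
  refine ⟨hxy, le_antisymm ?_ (le_min le_rfl h.le |>.trans (le_valuation_add hxy))⟩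
  have hle := le_valuation_add (x := x + y) (y := -y) (by simpa using hx)
  rw [add_neg_cancel_right, valuation_neg] at hle
  exact (min_le_iff.mp hle).resolve_right h.not_ge

lemma valuation_add_add_of_lt {x y z : ℚ_[p]} (hx : x ≠ 0) (hy : x.valuation < y.valuation)
    (hz : x.valuation < z.valuation) :
    x + y + z ≠ 0 ∧ (x + y + z).valuation = x.valuation := by
  rw [add_assoc]
  obtain hyz | hyz := eq_or_ne (y + z) 0
  · simpa [hyz] using hx
  · exact valuation_add_of_lt hx ((lt_min hy hz).trans_le (le_valuation_add hyz))

lemma valuation_intCast_of_not_dvd {n : ℤ} (h : ¬ (p : ℤ) ∣ n) : (n : ℚ_[p]).valuation = 0 := by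
  rw [valuation_intCast, padicValInt.eq_zero_of_not_dvd h, Nat.cast_zero]

lemma valuation_intCast_of_squarefree {n : ℤ} (hn : Squarefree n) (hpn : (p : ℤ) ∣ n) :
    (n : ℚ_[p]).valuation = 1 := by
  rw [valuation_intCast, padicValInt, ← Nat.factorization_def _ Fact.out,
    Nat.factorization_eq_one_of_squarefree (Int.squarefree_natAbs.mpr hn) Fact.out
      (Int.natCast_dvd.mp hpn), Nat.cast_one]

lemma even_valuation_quartic {c e δ : ℚ_[p]} (hc : c ≠ 0) (hvc : c.valuation = 0) (he : e ≠ 0)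
    (hve : 0 ≤ e.valuation) (hδ : δ.valuation = 1) (x : ℚ_[p]) :
    c * x ^ 4 - e * δ * x ^ 2 + δ ^ 2 ≠ 0 ∧
      Even (c * x ^ 4 - e * δ * x ^ 2 + δ ^ 2).valuation := by
  have hδ0 : δ ≠ 0 := by rintro rfl; simp at hδ
  obtain rfl | hx := eq_or_ne x 0
  · simp [hδ0, valuation_pow, hδ]
  set u := x.valuation
  have hA : (c * x ^ 4).valuation = 4 * u := by
    rw [valuation_mul hc (by positivity), hvc, valuation_pow]; push_cast; ring
  have hB : (-(e * δ * x ^ 2)).valuation = e.valuation + 1 + 2 * u := by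
    rw [valuation_neg, valuation_mul (by positivity) (by positivity), valuation_mul he hδ0, hδ,
      valuation_pow]
    push_cast; ring
  have hC : (δ ^ 2).valuation = 2 := by rw [valuation_pow, hδ]; rfl
  obtain hu | hu := le_or_gt u 0
  · obtain ⟨hne, hval⟩ := valuation_add_add_of_lt (x := c * x ^ 4) (y := -(e * δ * x ^ 2))
      (z := δ ^ 2) (mul_ne_zero hc (by positivity)) (by omega) (by omega)
    rw [← sub_eq_add_neg] at hne hval
    exact ⟨hne, hval ▸ hA ▸ ⟨2 * u, by ring⟩⟩
  · obtain ⟨hne, hval⟩ := valuation_add_add_of_lt (y := -(e * δ * x ^ 2)) (z := c * x ^ 4)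
      (pow_ne_zero 2 hδ0) (by omega) (by omega)
    have hf : δ ^ 2 + -(e * δ * x ^ 2) + c * x ^ 4 = c * x ^ 4 - e * δ * x ^ 2 + δ ^ 2 := by ring
    rw [hf] at hne hval
    exact ⟨hne, hval ▸ hC ▸ even_two⟩

end Padic

open Padic in
theorem stmt0_general (p : ℕ) [Fact p.Prime] (a b d : ℤ)
    (hd : Squarefree d) (hpd : (p : ℤ) ∣ d)
    (hu : ¬ (p : ℤ) ∣ 2 * a * (a ^ 2 - 4 * b)) :
    ¬ ∃ x y : ℚ_[p],
      (d : ℚ_[p]) * y ^ 2 =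
        ((a ^ 2 - 4 * b : ℤ) : ℚ_[p]) * x ^ 4
          - ((2 * a * d : ℤ) : ℚ_[p]) * x ^ 2 + ((d ^ 2 : ℤ) : ℚ_[p]) := by
  rintro ⟨x, y, hxy⟩
  have h2a : ¬ (p : ℤ) ∣ 2 * a := fun h => hu (h.mul_right _)
  have hc : ¬ (p : ℤ) ∣ a ^ 2 - 4 * b := fun h => hu (h.mul_left _)
  have hvd := valuation_intCast_of_squarefree (p := p) hd hpd
  obtain ⟨hne, ⟨r, hr⟩⟩ := even_valuation_quartic
    (Int.cast_ne_zero.mpr (by rintro h; simp [h] at hc)) (valuation_intCast_of_not_dvd hc)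
    (Int.cast_ne_zero.mpr (by rintro h; simp [h] at h2a)) (valuation_intCast_of_not_dvd h2a).ge
    hvd x
  push_cast at hxy hne hr
  rw [← hxy] at hne hr
  obtain ⟨hd0, hy⟩ := mul_ne_zero_iff.mp hne
  rw [valuation_mul hd0 hy, hvd, valuation_pow] at hr
  omega

/-- Let `p` be an odd prime, `a b d` integers with `d` squarefree, `p ∣ d`, and
`p ∤ 2a(a² - 4b)`. Then there is no point `(x, y) ∈ ℚ_p × ℚ_p` with
`d·y² = (a² - 4b)·x⁴ - 2·a·d·x² + d²`. -/
theorem stmt0 (p : ℕ) [Fact p.Prime] (hp2 : p ≠ 2) (a b d : ℤ)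
    (hd : Squarefree d) (hpd : (p : ℤ) ∣ d)
    (hu : ¬ (p : ℤ) ∣ 2 * a * (a ^ 2 - 4 * b)) :
    ¬ ∃ x y : ℚ_[p],
      (d : ℚ_[p]) * y ^ 2 =
        ((a ^ 2 - 4 * b : ℤ) : ℚ_[p]) * x ^ 4
          - ((2 * a * d : ℤ) : ℚ_[p]) * x ^ 2 + ((d ^ 2 : ℤ) : ℚ_[p]) :=
  stmt0_general p a b d hd hpd hu
end

section
/- Let p be an odd prime, d a squarefree integer divisible by p, and a, b integers with p not dividing 2a(a^2-4b). For any x ∈ Q_p with x ≠ 0, writing α = v_p(x), the p-adic valuation of (a^2-4b)·x^4 - 2·a·d·x^2 + d^2 equals 2 if α ≥ 1, equals 0 if α = 0, and equals 4α if α < 0. In particular this valuation is always even. -/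
/-!
With `α = v(x)`, the three terms `(a²-4b)x⁴`, `-2adx²`, `d²` have valuations `4α`, `2α + 1`
and `2`, because `a² - 4b` and `2a` are units and `v(d) = 1` for squarefree `d`. These are
pairwise distinct (`2α + 1` is odd), so by the strict ultrametric inequality the valuation of
the sum is their minimum, which is `2`, `0` or `4α` according to the sign of `α`.
-/

namespace Padic

variable {p : ℕ} [Fact p.Prime]

lemma add_ne_zero_of_valuation_ne {x y : ℚ_[p]} (h : x.valuation ≠ y.valuation) : x + y ≠ 0 := by
  intro hxy
  rw [add_eq_zero_iff_eq_neg.mp hxy, valuation_neg] at h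
  exact h rfl

lemma valuation_add_of_valuation_ne {x y : ℚ_[p]} (hx : x ≠ 0) (hy : y ≠ 0)
    (h : x.valuation ≠ y.valuation) :
    (x + y).valuation = min x.valuation y.valuation := by
  have hxy := add_ne_zero_of_valuation_ne h
  refine le_antisymm ?_ (le_valuation_add hxy)
  -- `x = (x + y) + (-y)` and `y = (x + y) + (-x)` bound the smaller valuation from below
  have hx' := le_valuation_add (x := x + y) (y := -y) (by simpa using hx)
  have hy' := le_valuation_add (x := x + y) (y := -x) (by simpa using hy)
  simp only [add_neg_cancel_right, add_neg_cancel_comm, valuation_neg] at hx' hy'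
  omega

lemma valuation_add_add_of_pairwise_ne {x y z : ℚ_[p]} (hx : x ≠ 0) (hy : y ≠ 0) (hz : z ≠ 0)
    (hxy : x.valuation ≠ y.valuation) (hxz : x.valuation ≠ z.valuation)
    (hyz : y.valuation ≠ z.valuation) :
    (x + y + z).valuation = min x.valuation (min y.valuation z.valuation) := by
  have hsum := valuation_add_of_valuation_ne hx hy hxy
  rw [valuation_add_of_valuation_ne (add_ne_zero_of_valuation_ne hxy) hz (by omega), hsum]
  omega

lemma valuation_intCast_of_squarefree_s1 {d : ℤ} (hd : Squarefree d) (hpd : (p : ℤ) ∣ d) :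
    (d : ℚ_[p]).valuation = 1 := by
  obtain ⟨m, rfl⟩ := hpd
  have hm : ¬ (p : ℤ) ∣ m := by
    rintro ⟨k, rfl⟩
    have := hd p ⟨k, by ring⟩
    exact (Nat.prime_iff_prime_int.mp Fact.out).not_isUnit this
  have hm0 : (m : ℚ_[p]) ≠ 0 := Int.cast_ne_zero.mpr (by rintro rfl; exact hm (dvd_zero _))
  rw [Int.cast_mul, Int.cast_natCast, valuation_mul (by exact_mod_cast NeZero.ne p) hm0,
    valuation_p, valuation_intCast_of_not_dvd hm, add_zero]

lemma valuation_quartic {c e f x : ℚ_[p]} (hc : c ≠ 0) (hcv : c.valuation = 0)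
    (he : e.valuation = 1) (hf : f.valuation = 2) (hx : x ≠ 0) :
    (c * x ^ 4 - e * x ^ 2 + f).valuation =
      min (4 * x.valuation) (min (2 * x.valuation + 1) 2) := by
  have he0 : e ≠ 0 := by rintro rfl; simp at he
  have hf0 : f ≠ 0 := by rintro rfl; simp at hf
  have h1 : (c * x ^ 4).valuation = 4 * x.valuation := by
    rw [valuation_mul hc (pow_ne_zero _ hx), valuation_pow, hcv]; push_cast; ring
  have h2 : (-(e * x ^ 2)).valuation = 2 * x.valuation + 1 := by
    rw [valuation_neg, valuation_mul he0 (pow_ne_zero _ hx), valuation_pow, he]; push_cast; ring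
  rw [sub_eq_add_neg, valuation_add_add_of_pairwise_ne (mul_ne_zero hc (pow_ne_zero _ hx))
    (neg_ne_zero.mpr (mul_ne_zero he0 (pow_ne_zero _ hx))) hf0, h1, h2, hf] <;> omega

end Padic

theorem stmt1_general (p : ℕ) [Fact p.Prime] (a b d : ℤ)
    (hd : Squarefree d) (hpd : (p : ℤ) ∣ d)
    (hu : ¬ (p : ℤ) ∣ 2 * a * (a ^ 2 - 4 * b))
    (x : ℚ_[p]) (hx : x ≠ 0) :
    (1 ≤ x.valuation →
      (((a ^ 2 - 4 * b : ℤ) : ℚ_[p]) * x ^ 4 - ((2 * a * d : ℤ) : ℚ_[p]) * x ^ 2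
        + ((d ^ 2 : ℤ) : ℚ_[p])).valuation = 2) ∧
    (x.valuation = 0 →
      (((a ^ 2 - 4 * b : ℤ) : ℚ_[p]) * x ^ 4 - ((2 * a * d : ℤ) : ℚ_[p]) * x ^ 2
        + ((d ^ 2 : ℤ) : ℚ_[p])).valuation = 0) ∧
    (x.valuation < 0 →
      (((a ^ 2 - 4 * b : ℤ) : ℚ_[p]) * x ^ 4 - ((2 * a * d : ℤ) : ℚ_[p]) * x ^ 2
        + ((d ^ 2 : ℤ) : ℚ_[p])).valuation = 4 * x.valuation) ∧
    Even ((((a ^ 2 - 4 * b : ℤ) : ℚ_[p]) * x ^ 4 - ((2 * a * d : ℤ) : ℚ_[p]) * x ^ 2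
        + ((d ^ 2 : ℤ) : ℚ_[p])).valuation) := by
  have h2a : ¬ (p : ℤ) ∣ 2 * a := fun h => hu (h.mul_right _)
  have hdisc : ¬ (p : ℤ) ∣ a ^ 2 - 4 * b := fun h => hu (h.mul_left _)
  have hdv := Padic.valuation_intCast_of_squarefree_s1 hd hpd
  have hc : ((a ^ 2 - 4 * b : ℤ) : ℚ_[p]) ≠ 0 :=
    Int.cast_ne_zero.mpr fun h => hdisc (h ▸ dvd_zero _)
  have h2a0 : ((2 * a : ℤ) : ℚ_[p]) ≠ 0 := Int.cast_ne_zero.mpr fun h => h2a (h ▸ dvd_zero _)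
  have he : ((2 * a * d : ℤ) : ℚ_[p]).valuation = 1 := by
    rw [Int.cast_mul, Padic.valuation_mul h2a0 (Int.cast_ne_zero.mpr hd.ne_zero),
      Padic.valuation_intCast_of_not_dvd h2a, hdv, zero_add]
  have hf : ((d ^ 2 : ℤ) : ℚ_[p]).valuation = 2 := by
    rw [Int.cast_pow, Padic.valuation_pow, hdv]; norm_num
  rw [Padic.valuation_quartic hc (Padic.valuation_intCast_of_not_dvd hdisc) he hf hx]
  exact ⟨by omega, by omega, by omega, ⟨min (2 * x.valuation) 1, by omega⟩⟩

/-- Valuation of `(a²-4b)x⁴ - 2adx² + d²` in `ℚ_p`: it equals `2` if `v_p(x) ≥ 1`,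
`0` if `v_p(x) = 0`, and `4·v_p(x)` if `v_p(x) < 0`; in particular it is always even. -/
theorem stmt1 (p : ℕ) [Fact p.Prime] (hp2 : p ≠ 2) (a b d : ℤ)
    (hd : Squarefree d) (hpd : (p : ℤ) ∣ d)
    (hu : ¬ (p : ℤ) ∣ 2 * a * (a ^ 2 - 4 * b))
    (x : ℚ_[p]) (hx : x ≠ 0) :
    (1 ≤ x.valuation →
      (((a ^ 2 - 4 * b : ℤ) : ℚ_[p]) * x ^ 4 - ((2 * a * d : ℤ) : ℚ_[p]) * x ^ 2
        + ((d ^ 2 : ℤ) : ℚ_[p])).valuation = 2) ∧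
    (x.valuation = 0 →
      (((a ^ 2 - 4 * b : ℤ) : ℚ_[p]) * x ^ 4 - ((2 * a * d : ℤ) : ℚ_[p]) * x ^ 2
        + ((d ^ 2 : ℤ) : ℚ_[p])).valuation = 0) ∧
    (x.valuation < 0 →
      (((a ^ 2 - 4 * b : ℤ) : ℚ_[p]) * x ^ 4 - ((2 * a * d : ℤ) : ℚ_[p]) * x ^ 2
        + ((d ^ 2 : ℤ) : ℚ_[p])).valuation = 4 * x.valuation) ∧
    Even ((((a ^ 2 - 4 * b : ℤ) : ℚ_[p]) * x ^ 4 - ((2 * a * d : ℤ) : ℚ_[p]) * x ^ 2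
        + ((d ^ 2 : ℤ) : ℚ_[p])).valuation) :=
  stmt1_general p a b d hd hpd hu x hx
end

section
/- Let E be an elliptic curve over ℚ given by y² = x³ + ax² + bx with a, b ∈ ℤ and b(a²−4b) ≠ 0, and let d be a squarefree integer. If the quartic curve d·y² = (a²−4b)x⁴ − 2adx² + d² has a ℚ_q-point for every prime q and an ℝ-point, then every prime divisor of d divides 2a(a²−4b). -/
/-!
Let `q ∣ d` be a prime with `q ∤ 2a(a² − 4b)`. Since `d` is squarefree, `‖d‖_q = q⁻¹`, which is
not the square of a `q`-adic norm. By the ultrametric inequality the right-hand side of the quartic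
has norm `max(‖x‖², ‖d‖)²` (the tie `‖x‖² = ‖d‖` cannot occur), a square of a norm, whereas the
left-hand side has norm `‖d‖ · ‖y‖²`, which is not. This is the parity-of-valuation argument in
multiplicative form.
-/

open IsUltrametricDist

section Ultrametric

variable {K : Type*} [NormedField K] [IsUltrametricDist K]

theorem norm_quartic_eq_max_sq {C T D x : K} (hC : ‖C‖ = 1) (hT : ‖T‖ ≤ ‖D‖)
    (hx : ‖x‖ ^ 2 ≠ ‖D‖) :
    ‖C * x ^ 4 - T * x ^ 2 + D ^ 2‖ = max (‖x‖ ^ 2) ‖D‖ ^ 2 := by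
  have hTx : ‖-(T * x ^ 2)‖ ≤ ‖D‖ * ‖x‖ ^ 2 := by
    rw [norm_neg, norm_mul, norm_pow]; gcongr
  have hCx : ‖C * x ^ 4‖ = (‖x‖ ^ 2) ^ 2 := by rw [norm_mul, hC, norm_pow]; ring
  rcases hx.lt_or_gt with hlt | hgt
  · have hD : 0 < ‖D‖ := (by positivity : 0 ≤ ‖x‖ ^ 2).trans_lt hlt
    have hsmall : ‖C * x ^ 4 + -(T * x ^ 2)‖ < ‖D ^ 2‖ := by
      refine (norm_add_le_max _ _).trans_lt (max_lt ?_ ?_) <;> rw [norm_pow]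
      · rw [hCx]; gcongr
      · exact hTx.trans_lt (by nlinarith)
    rw [← sub_eq_add_neg] at hsmall
    rw [max_eq_right hlt.le, add_comm, norm_add_eq_max_of_norm_ne_norm hsmall.ne',
      max_eq_left hsmall.le, norm_pow]
  · have hx0 : 0 < ‖x‖ ^ 2 := (norm_nonneg D).trans_lt hgt
    have hsmall : ‖-(T * x ^ 2) + D ^ 2‖ < ‖C * x ^ 4‖ := by
      refine (norm_add_le_max _ _).trans_lt (max_lt ?_ ?_) <;> rw [hCx]
      · exact hTx.trans_lt (by nlinarith)
      · rw [norm_pow]; gcongr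
    rw [max_eq_left hgt.le, sub_eq_add_neg, add_assoc,
      norm_add_eq_max_of_norm_ne_norm hsmall.ne', max_eq_left hsmall.le, hCx]

theorem mul_sq_ne_quartic {C T D : K} (hC : ‖C‖ = 1) (hT : ‖T‖ ≤ ‖D‖)
    (hD : ∀ w : K, ‖w‖ ^ 2 ≠ ‖D‖) (x y : K) :
    D * y ^ 2 ≠ C * x ^ 4 - T * x ^ 2 + D ^ 2 := by
  intro h
  have hD0 : 0 < ‖D‖ := norm_pos_iff.2 (by rintro rfl; exact hD 0 (by simp))
  obtain ⟨w, hw⟩ : ∃ w : K, max (‖x‖ ^ 2) ‖D‖ = ‖w‖ := by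
    rcases max_choice (‖x‖ ^ 2) ‖D‖ with hm | hm
    · exact ⟨x ^ 2, by rw [hm, norm_pow]⟩
    · exact ⟨D, hm⟩
  have hnorm := congrArg norm h
  rw [norm_quartic_eq_max_sq hC hT (hD x), hw, norm_mul, norm_pow] at hnorm
  have hw0 : 0 < ‖w‖ := hw ▸ hD0.trans_le (le_max_right _ _)
  have hy : y ≠ 0 := by
    rintro rfl
    rw [norm_zero, zero_pow two_ne_zero, mul_zero] at hnorm
    exact (pow_pos hw0 2).ne hnorm
  apply hD (w / y)
  rw [norm_div, div_pow, ← hnorm]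
  field_simp

end Ultrametric

namespace Padic

variable {p : ℕ} [Fact p.Prime]

theorem norm_sq_ne_norm_p (w : ℚ_[p]) : ‖w‖ ^ 2 ≠ ‖(p : ℚ_[p])‖ := by
  rcases eq_or_ne w 0 with rfl | hw
  · simp [eq_comm, (Fact.out : p.Prime).ne_zero]
  have hp : (1 : ℝ) < p := mod_cast (Fact.out : p.Prime).one_lt
  rw [norm_eq_zpow_neg_valuation hw, norm_p, ← zpow_natCast, ← zpow_mul,
    ← zpow_neg_one, Ne, zpow_right_inj₀ (by linarith) hp.ne']
  omega

theorem norm_intCast_eq_one_of_not_dvd {k : ℤ} (h : ¬ (p : ℤ) ∣ k) : ‖(k : ℚ_[p])‖ = 1 :=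
  (norm_int_le_one k).antisymm (not_lt.1 (mt norm_intCast_lt_one_iff.1 h))

theorem norm_intCast_eq_norm_p_of_squarefree {d : ℤ} (hd : Squarefree d) (hpd : (p : ℤ) ∣ d) :
    ‖(d : ℚ_[p])‖ = ‖(p : ℚ_[p])‖ := by
  obtain ⟨e, rfl⟩ := hpd
  have he : ¬ (p : ℤ) ∣ e := fun hpe ↦
    (Nat.prime_iff_prime_int.mp Fact.out).not_isUnit (hd p (mul_dvd_mul_left _ hpe))
  rw [Int.cast_mul, norm_mul, norm_intCast_eq_one_of_not_dvd he, mul_one, Int.cast_natCast]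

end Padic

theorem stmt19_general (a b : ℤ) (d : ℤ) (hd : Squarefree d)
    (hloc : ∀ (q : ℕ) [Fact q.Prime], ∃ x y : ℚ_[q],
      (d : ℚ_[q]) * y ^ 2 = ((a ^ 2 - 4 * b : ℤ) : ℚ_[q]) * x ^ 4
        - ((2 * a * d : ℤ) : ℚ_[q]) * x ^ 2 + ((d ^ 2 : ℤ) : ℚ_[q])) :
    ∀ q : ℕ, q.Prime → (q : ℤ) ∣ d → (q : ℤ) ∣ 2 * a * (a ^ 2 - 4 * b) := by
  intro q hq hqd
  have : Fact q.Prime := ⟨hq⟩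
  by_contra hndvd
  have hC : ‖((a ^ 2 - 4 * b : ℤ) : ℚ_[q])‖ = 1 :=
    Padic.norm_intCast_eq_one_of_not_dvd fun h ↦ hndvd (h.mul_left _)
  have hT : ‖((2 * a * d : ℤ) : ℚ_[q])‖ ≤ ‖(d : ℚ_[q])‖ := by
    rw [Int.cast_mul, norm_mul]
    exact mul_le_of_le_one_left (norm_nonneg _) (Padic.norm_int_le_one _)
  have hD (w : ℚ_[q]) : ‖w‖ ^ 2 ≠ ‖(d : ℚ_[q])‖ := by
    rw [Padic.norm_intCast_eq_norm_p_of_squarefree hd hqd]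
    exact Padic.norm_sq_ne_norm_p w
  obtain ⟨x, y, hxy⟩ := hloc q
  rw [Int.cast_pow] at hxy
  exact mul_sq_ne_quartic hC hT hD x y hxy

/-- Let `E : y² = x³ + ax² + bx` over `ℚ` with `b(a² − 4b) ≠ 0` and `d` squarefree. If
the quartic twist `d·y² = (a² − 4b)x⁴ − 2adx² + d²` has a `ℚ_q`-point for every prime `q`
and an `ℝ`-point, then every prime divisor of `d` divides `2a(a² − 4b)`. -/
theorem stmt19 (a b : ℤ) (hb : b * (a ^ 2 - 4 * b) ≠ 0) (d : ℤ) (hd : Squarefree d)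
    (hloc : ∀ (q : ℕ) [Fact q.Prime], ∃ x y : ℚ_[q],
      (d : ℚ_[q]) * y ^ 2 = ((a ^ 2 - 4 * b : ℤ) : ℚ_[q]) * x ^ 4
        - ((2 * a * d : ℤ) : ℚ_[q]) * x ^ 2 + ((d ^ 2 : ℤ) : ℚ_[q]))
    (hreal : ∃ x y : ℝ, (d : ℝ) * y ^ 2 = ((a ^ 2 - 4 * b : ℤ) : ℝ) * x ^ 4
        - ((2 * a * d : ℤ) : ℝ) * x ^ 2 + ((d ^ 2 : ℤ) : ℝ)) :
    ∀ q : ℕ, q.Prime → (q : ℤ) ∣ d → (q : ℤ) ∣ 2 * a * (a ^ 2 - 4 * b) :=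
  stmt19_general a b d hd hloc
end
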